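/- Let q : [t₁−τ,t₂] → ℝⁿ be C² and let h : [t₁−τ,t₂] → ℝⁿ be C² with h(t) = 0 for all t ∈ [t₁−τ,t₁], h(t) = 0 for all t ∈ [t₁, t₂−τ], and h(t₂) = 0. Then the function ε ↦ I^τ[q + εh] := ∫_{t₁}^{t₂} g(t, q(t)+εh(t), q̇(t)+εḣ(t), q(t−τ)+εh(t−τ), q̇(t−τ)+εḣ(t−τ)) dt is differentiable at ε = 0 and (d/dε)|_{ε=0} I^τ[q + εh] = ∫_{t₂−τ}^{t₂} [∂₂g[q]_τ(t) − d/dt ∂₃g[q]_τ(t)]·h(t) dt. -/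

import Mathlib

open Set MeasureTheory RealInnerProductSpace

noncomputable section

/-- `ℝⁿ` as a Euclidean space. -/
abbrev Vec (n : ℕ) := EuclideanSpace ℝ (Fin n)

/-- The type of Lagrangians `L(t, q, q̇, q_τ, q̇_τ)`. -/
abbrev Lag (n : ℕ) := ℝ → Vec n → Vec n → Vec n → Vec n → ℝ

/-- `∂₁L[q]_τ(t)`: partial derivative of `L` w.r.t. its first (time) argument,
evaluated along `[q]_τ(t) = (t, q(t), q̇(t), q(t-τ), q̇(t-τ))`. -/
def dL1 {n : ℕ} (L : Lag n) (τ : ℝ) (q : ℝ → Vec n) (t : ℝ) : ℝ :=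
  deriv (fun s => L s (q t) (deriv q t) (q (t - τ)) (deriv q (t - τ))) t

/-- `∂₂L[q]_τ(t)` (a gradient, i.e. a vector in `ℝⁿ`). -/
def dL2 {n : ℕ} (L : Lag n) (τ : ℝ) (q : ℝ → Vec n) (t : ℝ) : Vec n :=
  gradient (fun y => L t y (deriv q t) (q (t - τ)) (deriv q (t - τ))) (q t)

/-- `∂₃L[q]_τ(t)`. -/
def dL3 {n : ℕ} (L : Lag n) (τ : ℝ) (q : ℝ → Vec n) (t : ℝ) : Vec n :=
  gradient (fun v => L t (q t) v (q (t - τ)) (deriv q (t - τ))) (deriv q t)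

/-- `∂₄L[q]_τ(t)`. -/
def dL4 {n : ℕ} (L : Lag n) (τ : ℝ) (q : ℝ → Vec n) (t : ℝ) : Vec n :=
  gradient (fun y => L t (q t) (deriv q t) y (deriv q (t - τ))) (q (t - τ))

/-- `∂₅L[q]_τ(t)`. -/
def dL5 {n : ℕ} (L : Lag n) (τ : ℝ) (q : ℝ → Vec n) (t : ℝ) : Vec n :=
  gradient (fun v => L t (q t) (deriv q t) (q (t - τ)) v) (deriv q (t - τ))

/-- `L[q]_τ(t)`: the Lagrangian evaluated along the delayed trajectory. -/
def lagAlong {n : ℕ} (L : Lag n) (τ : ℝ) (q : ℝ → Vec n) (t : ℝ) : ℝ :=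
  L t (q t) (deriv q t) (q (t - τ)) (deriv q (t - τ))

/-- The delayed functional `J^τ[q] = ∫_{t₁}^{t₂} L[q]_τ(t) dt`. -/
def Jτ {n : ℕ} (L : Lag n) (t₁ t₂ τ : ℝ) (q : ℝ → Vec n) : ℝ :=
  ∫ t in t₁..t₂, lagAlong L τ q t

/-- `L` is `C²` in all of its arguments (jointly). -/
def LagC2 {n : ℕ} (L : Lag n) : Prop :=
  ContDiff ℝ 2 (fun p : ℝ × Vec n × Vec n × Vec n × Vec n =>
    L p.1 p.2.1 p.2.2.1 p.2.2.2.1 p.2.2.2.2)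

/-- The Euler–Lagrange equations with time delay for the Lagrangian `L`. -/
def ELdelay {n : ℕ} (L : Lag n) (t₁ t₂ τ : ℝ) (q : ℝ → Vec n) : Prop :=
  (∀ t ∈ Icc t₁ (t₂ - τ),
      deriv (fun s => dL3 L τ q s + dL5 L τ q (s + τ)) t
        = dL2 L τ q t + dL4 L τ q (t + τ)) ∧
  (∀ t ∈ Icc (t₂ - τ) t₂,
      deriv (fun s => dL3 L τ q s) t = dL2 L τ q t)

/-!
Differentiating under the integral sign, the first variation is the integral of the derivative
of `g` along `[q]_τ`, applied to `(0, h, ḣ, h(· - τ), ḣ(· - τ))`. As `h` vanishes on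
`[t₁ - τ, t₂ - τ]`, so does `ḣ`, and the delayed terms drop out, leaving
`∫ ∂₂g[q]_τ · h + ∂₃g[q]_τ · ḣ` over `[t₁, t₂]`. Integration by parts, with `h t₁ = h t₂ = 0`,
turns this into `∫ (∂₂g[q]_τ - d/dt ∂₃g[q]_τ) · h`, whose integrand vanishes on `[t₁, t₂ - τ]`.
-/

open InnerProductSpace

section

variable {E F : Type*} [NormedAddCommGroup E] [NormedSpace ℝ E] [NormedAddCommGroup F]
  [NormedSpace ℝ F]

theorem hasDerivAt_intervalIntegral_comp_add_smul {G : E → F} (hG : ContDiff ℝ 1 G)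
    {P V : ℝ → E} (hP : Continuous P) (hV : Continuous V) (a b : ℝ) :
    HasDerivAt (fun ε : ℝ => ∫ t in a..b, G (P t + ε • V t))
      (∫ t in a..b, fderiv ℝ G (P t) (V t)) 0 := by
  have hPV : Continuous fun p : ℝ × ℝ => P p.2 + p.1 • V p.2 :=
    (hP.comp continuous_snd).add (continuous_fst.smul (hV.comp continuous_snd))
  have hG' : Continuous fun p : ℝ × ℝ => fderiv ℝ G (P p.2 + p.1 • V p.2) (V p.2) :=
    ((hG.continuous_fderiv one_ne_zero).comp hPV).clm_apply (hV.comp continuous_snd)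
  obtain ⟨C, hC⟩ := ((isCompact_closedBall (0 : ℝ) 1).prod (isCompact_uIcc (a := a) (b := b)))
    |>.exists_bound_of_continuousOn hG'.continuousOn
  have hderiv := intervalIntegral.hasDerivAt_integral_of_dominated_loc_of_deriv_le
    (μ := volume) (F := fun ε t => G (P t + ε • V t)) (bound := fun _ => C)
    (Metric.ball_mem_nhds 0 one_pos)
    (.of_forall fun ε => (hG.continuous.comp (hPV.comp (.prodMk_right ε))).aestronglyMeasurable)
    ((hG.continuous.comp (hPV.comp (.prodMk_right 0))).intervalIntegrable a b)
    (hG'.comp (.prodMk_right 0)).aestronglyMeasurable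
    (.of_forall fun t ht ε hε =>
      hC (ε, t) ⟨Metric.ball_subset_closedBall hε, uIoc_subset_uIcc ht⟩)
    intervalIntegrable_const
    (.of_forall fun t _ ε _ =>
      (hG.differentiable one_ne_zero _).hasFDerivAt.comp_hasDerivAt ε
        (by simpa using ((hasDerivAt_id ε).smul_const (V t)).const_add (P t)))
  simpa using hderiv.2

theorem deriv_eqOn_zero_of_eqOn_zero {f : ℝ → F} (hf : Differentiable ℝ f) {a b : ℝ}
    (hab : a < b) (h0 : EqOn f 0 (Icc a b)) : EqOn (deriv f) 0 (Icc a b) := by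
  intro t ht
  rw [← (hf t).derivWithin (uniqueDiffOn_Icc hab t ht), derivWithin_congr h0 (h0 ht)]
  simp

theorem intervalIntegral.integral_eq_integral_of_eqOn_zero {f : ℝ → F} {a b c : ℝ}
    (hf : IntervalIntegrable f volume c b) (h0 : EqOn f 0 (uIcc a c)) :
    ∫ t in a..b, f t = ∫ t in c..b, f t := by
  have hac : IntervalIntegrable f volume a c :=
    intervalIntegrable_const.congr (h0.symm.mono uIoc_subset_uIcc)
  rw [← intervalIntegral.integral_add_adjacent_intervals hac hf,
    intervalIntegral.integral_congr h0]
  simp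

end

section

variable {E : Type*} [NormedAddCommGroup E] [InnerProductSpace ℝ E] {A h : ℝ → E} {a b : ℝ}

theorem intervalIntegral.integral_inner_deriv_eq_neg (hA : ContDiff ℝ 1 A)
    (hh : ContDiff ℝ 1 h) (ha : h a = 0) (hb : h b = 0) :
    ∫ t in a..b, ⟪A t, deriv h t⟫ = -∫ t in a..b, ⟪deriv A t, h t⟫ := by
  have hA' := hA.continuous_deriv le_rfl
  have hh' := hh.continuous_deriv le_rfl
  have hibp := intervalIntegral.integral_eq_sub_of_hasDerivAt (a := a) (b := b)
    (fun t _ => (hA.differentiable one_ne_zero t).hasDerivAt.inner ℝ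
      (hh.differentiable one_ne_zero t).hasDerivAt)
    (((hA.continuous.inner hh').add (hA'.inner hh.continuous)).intervalIntegrable a b)
  rw [intervalIntegral.integral_add ((hA.continuous.inner hh').intervalIntegrable a b)
    ((hA'.inner hh.continuous).intervalIntegrable a b), ha, hb] at hibp
  simp only [inner_zero_right, sub_zero] at hibp
  linarith

theorem intervalIntegral.integral_inner_add_inner_deriv_eq {B : ℝ → E} (hA : ContDiff ℝ 1 A)
    (hB : Continuous B) (hh : ContDiff ℝ 1 h) (ha : h a = 0) (hb : h b = 0) :
    ∫ t in a..b, ⟪B t, h t⟫ + ⟪A t, deriv h t⟫ = ∫ t in a..b, ⟪B t - deriv A t, h t⟫ := by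
  have hBh : IntervalIntegrable (fun t => ⟪B t, h t⟫) volume a b :=
    (hB.inner hh.continuous).intervalIntegrable a b
  simp only [inner_sub_left]
  rw [intervalIntegral.integral_add hBh
      ((hA.continuous.inner (hh.continuous_deriv le_rfl)).intervalIntegrable a b),
    intervalIntegral.integral_sub hBh
      (((hA.continuous_deriv le_rfl).inner hh.continuous).intervalIntegrable a b),
    integral_inner_deriv_eq_neg hA hh ha hb, sub_eq_add_neg]

end

theorem gradient_comp_of_hasFDerivAt {E F : Type*} [NormedAddCommGroup E] [NormedSpace ℝ E]
    [NormedAddCommGroup F] [InnerProductSpace ℝ F] [CompleteSpace F] {G : E → ℝ} {u : F → E}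
    {ι : F →L[ℝ] E} {x : F} (hG : DifferentiableAt ℝ G (u x)) (hu : HasFDerivAt u ι x) :
    gradient (G ∘ u) x = (toDual ℝ F).symm ((fderiv ℝ G (u x)).comp ι) := by
  rw [gradient, (hG.hasFDerivAt.comp x hu).fderiv]

theorem ContDiff.toDual_symm_fderiv_comp {D E F : Type*} [NormedAddCommGroup D]
    [NormedSpace ℝ D] [NormedAddCommGroup E] [NormedSpace ℝ E] [NormedAddCommGroup F]
    [InnerProductSpace ℝ F] [CompleteSpace F] {G : E → ℝ} {P : D → E} {k m : WithTop ℕ∞}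
    (hG : ContDiff ℝ k G) (hP : ContDiff ℝ m P) (hmk : m + 1 ≤ k) (ι : F →L[ℝ] E) :
    ContDiff ℝ m fun x => (toDual ℝ F).symm ((fderiv ℝ G (P x)).comp ι) :=
  (toDual ℝ F).symm.contDiff.comp
    ((((ContinuousLinearMap.compL ℝ F E ℝ).flip ι).contDiff.comp (hG.fderiv_right hmk)).comp hP)

abbrev Jet (n : ℕ) := Vec n × Vec n × Vec n × Vec n

/-- `LagC2 L` says precisely that `L.uncurry` is `C²`. -/
def Lag.uncurry {n : ℕ} (L : Lag n) : ℝ × Jet n → ℝ :=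
  fun p => L p.1 p.2.1 p.2.2.1 p.2.2.2.1 p.2.2.2.2

def delayedJet {n : ℕ} (τ : ℝ) (q : ℝ → Vec n) (t : ℝ) : Jet n :=
  (q t, deriv q t, q (t - τ), deriv q (t - τ))

theorem Lag.uncurry_delayedJet_add_smul {n : ℕ} (L : Lag n) (τ : ℝ) (q h : ℝ → Vec n)
    (t ε : ℝ) :
    L.uncurry ((t, delayedJet τ q t) + ε • (0, delayedJet τ h t)) =
      L t (q t + ε • h t) (deriv q t + ε • deriv h t) (q (t - τ) + ε • h (t - τ))
        (deriv q (t - τ) + ε • deriv h (t - τ)) := by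
  simp [Lag.uncurry, delayedJet]

section

variable {n : ℕ} {L : Lag n} (τ : ℝ) (q : ℝ → Vec n)

theorem ContDiff.delayedJet {k m : WithTop ℕ∞} (hq : ContDiff ℝ k q) (hmk : m + 1 ≤ k) :
    ContDiff ℝ m (delayedJet τ q) := by
  have hshift : ContDiff ℝ m (· - τ) := contDiff_id.sub contDiff_const
  have hq₀ : ContDiff ℝ m q := hq.of_le (le_self_add.trans hmk)
  have hq₁ : ContDiff ℝ m (deriv q) := (hq.of_le hmk).deriv'
  exact hq₀.prodMk (hq₁.prodMk ((hq₀.comp hshift).prodMk (hq₁.comp hshift)))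

theorem contDiff_prodMk_delayedJet (hq : ContDiff ℝ 2 q) :
    ContDiff ℝ 1 fun t => (t, delayedJet τ q t) :=
  contDiff_id.prodMk (hq.delayedJet τ q le_rfl)

theorem dL2_eq (t : ℝ) (hL : DifferentiableAt ℝ L.uncurry (t, delayedJet τ q t)) :
    dL2 L τ q t = (toDual ℝ (Vec n)).symm ((fderiv ℝ L.uncurry (t, delayedJet τ q t)).comp
      (.inr ℝ ℝ (Jet n) ∘L .inl ℝ (Vec n) _)) :=
  gradient_comp_of_hasFDerivAt (u := fun y => (t, y, deriv q t, q (t - τ), deriv q (t - τ))) hL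
    ((hasFDerivAt_prodMk_right t _).comp _ (hasFDerivAt_prodMk_left _ _))

theorem dL3_eq (t : ℝ) (hL : DifferentiableAt ℝ L.uncurry (t, delayedJet τ q t)) :
    dL3 L τ q t = (toDual ℝ (Vec n)).symm ((fderiv ℝ L.uncurry (t, delayedJet τ q t)).comp
      (.inr ℝ ℝ (Jet n) ∘L .inr ℝ (Vec n) _ ∘L .inl ℝ (Vec n) _)) :=
  gradient_comp_of_hasFDerivAt (u := fun y => (t, q t, y, q (t - τ), deriv q (t - τ))) hL
    ((hasFDerivAt_prodMk_right t _).comp _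
      ((hasFDerivAt_prodMk_right _ _).comp _ (hasFDerivAt_prodMk_left _ _)))

theorem fderiv_uncurry_apply_delayedJet (t : ℝ)
    (hL : DifferentiableAt ℝ L.uncurry (t, delayedJet τ q t)) {h : ℝ → Vec n}
    (hτ₀ : h (t - τ) = 0) (hτ₁ : deriv h (t - τ) = 0) :
    fderiv ℝ L.uncurry (t, delayedJet τ q t) (0, delayedJet τ h t) =
      ⟪dL2 L τ q t, h t⟫ + ⟪dL3 L τ q t, deriv h t⟫ := by
  have hsplit : ((0, delayedJet τ h t) : ℝ × Jet n) =
      (0, h t, 0, 0, 0) + (0, 0, deriv h t, 0, 0) := by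
    simp [delayedJet, hτ₀, hτ₁]
  rw [dL2_eq τ q t hL, dL3_eq τ q t hL, toDual_symm_apply, toDual_symm_apply, hsplit, map_add]
  rfl

variable (hL : LagC2 L) (hq : ContDiff ℝ 2 q)
include hL hq

theorem contDiff_dL2 : ContDiff ℝ 1 (dL2 L τ q) := by
  rw [show dL2 L τ q = _ from funext fun t => dL2_eq τ q t ((hL.differentiable two_ne_zero) _)]
  exact hL.toDual_symm_fderiv_comp (contDiff_prodMk_delayedJet τ q hq) le_rfl _

theorem contDiff_dL3 : ContDiff ℝ 1 (dL3 L τ q) := by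
  rw [show dL3 L τ q = _ from funext fun t => dL3_eq τ q t ((hL.differentiable two_ne_zero) _)]
  exact hL.toDual_symm_fderiv_comp (contDiff_prodMk_delayedJet τ q hq) le_rfl _

theorem hasDerivAt_integral_add_smul_of_delayed_eqOn_zero {h : ℝ → Vec n} (hh : ContDiff ℝ 2 h)
    {a b : ℝ} (hab : a < b) (hzero : EqOn h 0 (Icc (a - τ) (b - τ))) :
    HasDerivAt (fun ε : ℝ => ∫ t in a..b,
        L t (q t + ε • h t) (deriv q t + ε • deriv h t)
          (q (t - τ) + ε • h (t - τ)) (deriv q (t - τ) + ε • deriv h (t - τ)))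
      (∫ t in a..b, ⟪dL2 L τ q t, h t⟫ + ⟪dL3 L τ q t, deriv h t⟫) 0 := by
  have hL' : ContDiff ℝ 2 L.uncurry := hL
  have hzero' := deriv_eqOn_zero_of_eqOn_zero (hh.differentiable two_ne_zero) (by linarith) hzero
  have hvariation := hasDerivAt_intervalIntegral_comp_add_smul (hL'.of_le one_le_two)
    (P := fun t => (t, delayedJet τ q t)) (V := fun t => (0, delayedJet τ h t))
    (contDiff_prodMk_delayedJet τ q hq).continuous
    (continuous_const.prodMk (hh.delayedJet τ h (m := 1) le_rfl).continuous) a b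
  simp only [Lag.uncurry_delayedJet_add_smul] at hvariation
  refine hvariation.congr_deriv (intervalIntegral.integral_congr fun t ht => ?_)
  rw [uIcc_of_le hab.le] at ht
  have hdelay : t - τ ∈ Icc (a - τ) (b - τ) := ⟨by linarith [ht.1], by linarith [ht.2]⟩
  exact fderiv_uncurry_apply_delayedJet τ q t (hL'.differentiable two_ne_zero _)
    (hzero hdelay) (hzero' hdelay)

end

theorem first_variation_with_time_delay_second_interval_general
    {n : ℕ} (t₁ t₂ τ : ℝ) (ht : t₁ < t₂)
    (hτ' : τ < t₂ - t₁) (g : Lag n) (hg : LagC2 g)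
    (q : ℝ → Vec n) (hq : ContDiff ℝ 2 q)
    (h : ℝ → Vec n) (hh : ContDiff ℝ 2 h)
    (hh₁ : ∀ t ∈ Icc (t₁ - τ) t₁, h t = 0)
    (hh₂ : ∀ t ∈ Icc t₁ (t₂ - τ), h t = 0)
    (hh₃ : h t₂ = 0) :
    HasDerivAt (fun ε : ℝ => ∫ t in t₁..t₂,
        g t (q t + ε • h t) (deriv q t + ε • deriv h t)
          (q (t - τ) + ε • h (t - τ)) (deriv q (t - τ) + ε • deriv h (t - τ)))
      (∫ t in (t₂ - τ)..t₂,
        ⟪dL2 g τ q t - deriv (fun s => dL3 g τ q s) t, h t⟫)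
      0 := by
  have hzero : EqOn h 0 (Icc (t₁ - τ) (t₂ - τ)) := fun t ht =>
    (le_total t t₁).elim (fun htt => hh₁ t ⟨ht.1, htt⟩) fun htt => hh₂ t ⟨htt, ht.2⟩
  have hEL : Continuous fun t => ⟪dL2 g τ q t - deriv (dL3 g τ q) t, h t⟫ :=
    ((contDiff_dL2 τ q hg hq).continuous.sub
      ((contDiff_dL3 τ q hg hq).continuous_deriv le_rfl)).inner hh.continuous
  have hEL_zero : EqOn (fun t => ⟪dL2 g τ q t - deriv (dL3 g τ q) t, h t⟫) 0
      (uIcc t₁ (t₂ - τ)) := fun t ht' => by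
    rw [uIcc_of_le (by linarith)] at ht'
    simp [hh₂ t ht']
  refine (hasDerivAt_integral_add_smul_of_delayed_eqOn_zero τ q hg hq hh ht hzero).congr_deriv ?_
  rw [intervalIntegral.integral_inner_add_inner_deriv_eq (contDiff_dL3 τ q hg hq)
      (contDiff_dL2 τ q hg hq).continuous (hh.of_le one_le_two)
      (hh₂ t₁ ⟨le_rfl, by linarith⟩) hh₃,
    intervalIntegral.integral_eq_integral_of_eqOn_zero (hEL.intervalIntegrable _ _) hEL_zero]

/-- first variation of the delayed functional `I^τ` for variations
vanishing on `[t₁-τ, t₁]` and on `[t₁, t₂-τ]`, with `h(t₂) = 0`. -/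
theorem first_variation_with_time_delay_second_interval
    {n : ℕ} (hn : 0 < n) (t₁ t₂ τ : ℝ) (ht : t₁ < t₂) (hτ : 0 < τ)
    (hτ' : τ < t₂ - t₁) (g : Lag n) (hg : LagC2 g)
    (q : ℝ → Vec n) (hq : ContDiff ℝ 2 q)
    (h : ℝ → Vec n) (hh : ContDiff ℝ 2 h)
    (hh₁ : ∀ t ∈ Icc (t₁ - τ) t₁, h t = 0)
    (hh₂ : ∀ t ∈ Icc t₁ (t₂ - τ), h t = 0)
    (hh₃ : h t₂ = 0) :
    HasDerivAt (fun ε : ℝ => ∫ t in t₁..t₂,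
        g t (q t + ε • h t) (deriv q t + ε • deriv h t)
          (q (t - τ) + ε • h (t - τ)) (deriv q (t - τ) + ε • deriv h (t - τ)))
      (∫ t in (t₂ - τ)..t₂,
        ⟪dL2 g τ q t - deriv (fun s => dL3 g τ q s) t, h t⟫)
      0 :=
  first_variation_with_time_delay_second_interval_general t₁ t₂ τ ht hτ' g hg q hq h hh hh₁ hh₂ hh₃
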